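/- Let n be an odd positive integer. The number of pairs (d, ℓ) where d is a divisor of n with n | d² and ℓ is a residue class modulo d²/n satisfying ℓ² ≡ 1 (mod d²/n), equals the number of divisors of n. -/

import Mathlib

/-!
Put `m = d² / n`. The conditions `d ∣ n` and `n ∣ d²` say exactly that `n = c² m` and `d = c m`,
where `c = n / d`. When `m` is odd, a square root `ℓ` of `1` modulo `m` splits `m` into the coprime
factors `u = gcd(m, ℓ + 1)` and `v = gcd(m, ℓ - 1)`: their gcd divides `(ℓ + 1) - (ℓ - 1) = 2`.
By the Chinese remainder theorem, each coprime factorization `m = u v` comes from exactly one `ℓ`.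
So the pairs `(d, ℓ)` correspond to the factorizations `n = c² u v` with `u, v` coprime. These in
turn correspond to the divisors `e = c u` of `n`, because `c = gcd(e, n / e)`.
-/

theorem Int.isCoprime_of_dvd_of_sub_dvd_two {k a b : ℤ} (hk : Odd k) (ha : k ∣ a)
    (hab : b - a ∣ 2) : IsCoprime k b := by
  obtain ⟨t, rfl⟩ := ha
  simpa using ((Int.isCoprime_two_right.mpr hk).of_isCoprime_of_dvd_right hab).add_mul_left_right t

theorem Int.gcd_mul_natCast_eq {u a : ℤ} {v : ℕ} (hv : (v : ℤ) ∣ a) (hu : IsCoprime u a) :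
    Int.gcd (u * v) a = v :=
  Int.gcd_eq_iff.mpr ⟨dvd_mul_left _ _, hv, fun _ hcuv hca =>
    (hu.of_isCoprime_of_dvd_right hca).symm.dvd_of_dvd_mul_left hcuv⟩

theorem Int.existsUnique_dvd_sub_dvd_sub {u v : ℕ} (huv : u.Coprime v) (hu : u ≠ 0) (hv : v ≠ 0)
    (a b : ℤ) : ∃! ℓ : ℤ, (0 ≤ ℓ ∧ ℓ < u * v) ∧ (u : ℤ) ∣ ℓ - a ∧ (v : ℤ) ∣ ℓ - b := by
  have huv' : IsCoprime (u : ℤ) v := Nat.isCoprime_iff_coprime.mpr huv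
  have hm : (0 : ℤ) < u * v := by positivity
  apply existsUnique_of_exists_of_unique
  · obtain ⟨x, y, hxy⟩ := huv'
    -- `x * u + y * v = 1` makes this `a` modulo `u` and `b` modulo `v`.
    set ℓ := a * y * v + b * x * u
    refine ⟨ℓ % (u * v), ⟨Int.emod_nonneg _ hm.ne', Int.emod_lt_of_pos _ hm⟩,
      ⟨x * (b - a) - v * (ℓ / (u * v)), ?_⟩, ⟨y * (a - b) - u * (ℓ / (u * v)), ?_⟩⟩
    · rw [Int.emod_def]
      linear_combination a * hxy
    · rw [Int.emod_def]
      linear_combination b * hxy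
  · rintro ℓ ℓ' ⟨⟨h0, hlt⟩, hua, hvb⟩ ⟨⟨h0', hlt'⟩, hua', hvb'⟩
    have hdvd : (u * v : ℤ) ∣ ℓ - ℓ' :=
      huv'.mul_dvd (by simpa using dvd_sub hua hua') (by simpa using dvd_sub hvb hvb')
    have := Int.eq_zero_of_abs_lt_dvd hdvd (abs_sub_lt_iff.mpr ⟨by linarith, by linarith⟩)
    linarith

theorem coprime_gcd_add_one_gcd_sub_one {m : ℕ} (hm : Odd m) (ℓ : ℤ) :
    Nat.Coprime (Int.gcd m (ℓ + 1)) (Int.gcd m (ℓ - 1)) := by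
  rw [← Nat.isCoprime_iff_coprime]
  have hodd : Odd (Int.gcd m (ℓ + 1) : ℤ) :=
    (hm.of_dvd_nat (Int.natCast_dvd_natCast.mp (Int.gcd_dvd_left _ _))).natCast
  refine (Int.isCoprime_of_dvd_of_sub_dvd_two hodd (Int.gcd_dvd_right _ _) ?_)
    |>.of_isCoprime_of_dvd_right (Int.gcd_dvd_right _ _)
  rw [show ℓ - 1 - (ℓ + 1) = -2 by ring, neg_dvd]

theorem gcd_add_one_mul_gcd_sub_one {m : ℕ} (hm : Odd m) {ℓ : ℤ} (h : ℓ ^ 2 ≡ 1 [ZMOD m]) :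
    Int.gcd m (ℓ + 1) * Int.gcd m (ℓ - 1) = m := by
  apply Nat.dvd_antisymm
  · exact (coprime_gcd_add_one_gcd_sub_one hm ℓ).mul_dvd_of_dvd_of_dvd
      (Int.natCast_dvd_natCast.mp (Int.gcd_dvd_left _ _))
      (Int.natCast_dvd_natCast.mp (Int.gcd_dvd_left _ _))
  · apply Int.natCast_dvd_natCast.mp
    push_cast
    rw [Int.dvd_gcd_mul_gcd_iff_dvd_mul, show (ℓ + 1) * (ℓ - 1) = ℓ ^ 2 - 1 by ring]
    exact h.symm.dvd

theorem div_mul_sq_div_eq {n d : ℕ} (hn : n ≠ 0) (hd : d ∣ n) (hd2 : n ∣ d ^ 2) :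
    n / d * (d ^ 2 / n) = d := by
  obtain ⟨c, rfl⟩ := hd
  obtain ⟨m, hm⟩ := hd2
  have hd0 : d ≠ 0 := left_ne_zero_of_mul hn
  rw [Nat.mul_div_cancel_left _ (Nat.pos_of_ne_zero hd0), hm,
    Nat.mul_div_cancel_left _ (Nat.pos_of_ne_zero hn)]
  refine Nat.eq_of_mul_eq_mul_left (Nat.pos_of_ne_zero hd0) ?_
  rw [← mul_assoc, ← hm, sq]

theorem odd_sq_div {n d : ℕ} (hn : Odd n) (hd : d ∣ n) (hd2 : n ∣ d ^ 2) : Odd (d ^ 2 / n) :=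
  hn.of_dvd_nat ((Dvd.intro_left _ (div_mul_sq_div_eq hn.pos.ne' hd hd2)).trans hd)

def sqCoprimeFactorizations (n : ℕ) : Set (ℕ × ℕ × ℕ) :=
  {t | t.1 ^ 2 * (t.2.1 * t.2.2) = n ∧ t.2.1.Coprime t.2.2}

theorem bijOn_sqCoprimeFactorizations_divisors {n : ℕ} (hn : n ≠ 0) :
    Set.BijOn (fun t : ℕ × ℕ × ℕ => t.1 * t.2.1) (sqCoprimeFactorizations n) n.divisors := by
  refine ⟨?_, ?_, ?_⟩
  · rintro ⟨c, u, v⟩ ⟨rfl, -⟩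
    simp only [Finset.mem_coe, Nat.mem_divisors]
    exact ⟨⟨c * v, by ring⟩, hn⟩
  · rintro ⟨c, u, v⟩ ⟨hn₁, huv⟩ ⟨c', u', v'⟩ ⟨hn₂, huv'⟩ (he : c * u = c' * u')
    dsimp only at hn₁ hn₂ huv huv'
    subst hn₁
    have hcu : 0 < c * u :=
      Nat.pos_of_ne_zero fun h => hn (by rw [sq, mul_mul_mul_comm, h, zero_mul])
    have hcv : c * v = c' * v' := Nat.eq_of_mul_eq_mul_left hcu <| calc
      c * u * (c * v) = c' ^ 2 * (u' * v') := by rw [hn₂]; ring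
      _ = c * u * (c' * v') := by rw [he]; ring
    obtain rfl : c = c' := calc
      c = Nat.gcd (c * u) (c * v) := by rw [Nat.gcd_mul_left, huv.gcd_eq_one, mul_one]
      _ = Nat.gcd (c' * u') (c' * v') := by rw [he, hcv]
      _ = c' := by rw [Nat.gcd_mul_left, huv'.gcd_eq_one, mul_one]
    have hc0 : 0 < c := Nat.pos_of_mul_pos_right hcu
    rw [Nat.eq_of_mul_eq_mul_left hc0 he, Nat.eq_of_mul_eq_mul_left hc0 hcv]
  · intro e he
    obtain ⟨⟨f, rfl⟩, hn⟩ := Nat.mem_divisors.mp he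
    have hg : 0 < Nat.gcd e f :=
      Nat.gcd_pos_of_pos_left _ (Nat.pos_of_ne_zero (left_ne_zero_of_mul hn))
    refine ⟨(Nat.gcd e f, e / Nat.gcd e f, f / Nat.gcd e f), ⟨?_, Nat.coprime_div_gcd_div_gcd hg⟩,
      Nat.mul_div_cancel' (Nat.gcd_dvd_left e f)⟩
    dsimp only
    rw [sq, mul_mul_mul_comm, Nat.mul_div_cancel' (Nat.gcd_dvd_left e f),
      Nat.mul_div_cancel' (Nat.gcd_dvd_right e f)]

def sqrtOnePairs (n : ℕ) : Set (ℕ × ℤ) :=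
  {p | p.1 ∣ n ∧ n ∣ p.1 ^ 2 ∧ 0 ≤ p.2 ∧ p.2 < ((p.1 ^ 2 / n : ℕ) : ℤ) ∧
    p.2 ^ 2 ≡ 1 [ZMOD ((p.1 ^ 2 / n : ℕ) : ℤ)]}

def toSqCoprimeFactorization (n : ℕ) (p : ℕ × ℤ) : ℕ × ℕ × ℕ :=
  (n / p.1, Int.gcd (p.1 ^ 2 / n : ℕ) (p.2 + 1), Int.gcd (p.1 ^ 2 / n : ℕ) (p.2 - 1))

theorem mapsTo_toSqCoprimeFactorization {n : ℕ} (hn : Odd n) :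
    Set.MapsTo (toSqCoprimeFactorization n) (sqrtOnePairs n) (sqCoprimeFactorizations n) := by
  rintro ⟨d, ℓ⟩ ⟨hd, hd2, -, -, hℓ⟩
  refine ⟨?_, coprime_gcd_add_one_gcd_sub_one (odd_sq_div hn hd hd2) ℓ⟩
  dsimp only [toSqCoprimeFactorization]
  rw [gcd_add_one_mul_gcd_sub_one (odd_sq_div hn hd hd2) hℓ, sq, mul_assoc,
    div_mul_sq_div_eq hn.pos.ne' hd hd2, Nat.div_mul_cancel hd]

theorem injOn_toSqCoprimeFactorization {n : ℕ} (hn : Odd n) :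
    Set.InjOn (toSqCoprimeFactorization n) (sqrtOnePairs n) := by
  rintro ⟨d, ℓ⟩ ⟨hd, hd2, h0, hlt, hℓ⟩ ⟨d', ℓ'⟩ ⟨hd', -, h0', hlt', -⟩ heq
  simp only [toSqCoprimeFactorization, Prod.mk.injEq] at heq
  obtain ⟨hc, hu, hv⟩ := heq
  dsimp only at hd hd2 hℓ hd' h0 h0' hlt hlt'
  obtain rfl : d = d' := by
    rw [← Nat.div_div_self hd hn.pos.ne', hc, Nat.div_div_self hd' hn.pos.ne']
  have hm0 : d ^ 2 / n ≠ 0 := (odd_sq_div hn hd hd2).pos.ne'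
  rw [← gcd_add_one_mul_gcd_sub_one (odd_sq_div hn hd hd2) hℓ] at hm0 hlt hlt'
  push_cast at hlt hlt'
  have hcrt := Int.existsUnique_dvd_sub_dvd_sub
    (coprime_gcd_add_one_gcd_sub_one (odd_sq_div hn hd hd2) ℓ)
    (left_ne_zero_of_mul hm0) (right_ne_zero_of_mul hm0) (-1) 1
  have gcd_dvd (x : ℤ) : (Int.gcd (d ^ 2 / n : ℕ) (x + 1) : ℤ) ∣ x - -1 := by
    rw [sub_neg_eq_add]
    exact Int.gcd_dvd_right _ _
  exact congrArg _ (hcrt.unique ⟨⟨h0, hlt⟩, gcd_dvd ℓ, Int.gcd_dvd_right _ _⟩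
    ⟨⟨h0', hlt'⟩, hu ▸ gcd_dvd ℓ', hv ▸ Int.gcd_dvd_right _ _⟩)

theorem surjOn_toSqCoprimeFactorization {n : ℕ} (hn : Odd n) :
    Set.SurjOn (toSqCoprimeFactorization n) (sqrtOnePairs n) (sqCoprimeFactorizations n) := by
  rintro ⟨c, u, v⟩ ⟨rfl, huv⟩
  dsimp only at huv hn ⊢
  have hu : Odd u := hn.of_dvd_nat ⟨c ^ 2 * v, by ring⟩
  have hv : Odd v := hn.of_dvd_nat ⟨c ^ 2 * u, by ring⟩
  obtain ⟨ℓ, ⟨⟨h0, hlt⟩, hℓu, hℓv⟩, -⟩ :=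
    Int.existsUnique_dvd_sub_dvd_sub huv hu.pos.ne' hv.pos.ne' (-1) 1
  rw [sub_neg_eq_add] at hℓu
  have hm : (c * (u * v)) ^ 2 / (c ^ 2 * (u * v)) = u * v := by
    rw [show (c * (u * v)) ^ 2 = c ^ 2 * (u * v) * (u * v) by ring,
      Nat.mul_div_cancel_left _ hn.pos]
  have hc : c ^ 2 * (u * v) / (c * (u * v)) = c :=
    Nat.div_eq_of_eq_mul_left
      (Nat.pos_of_ne_zero fun h => hn.pos.ne' (by rw [sq, mul_assoc, h, mul_zero])) (by ring)
  have hgu : Int.gcd (u * v : ℤ) (ℓ + 1) = u := by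
    rw [mul_comm]
    refine Int.gcd_mul_natCast_eq hℓu (Int.isCoprime_of_dvd_of_sub_dvd_two hv.natCast hℓv ?_)
    rw [show ℓ + 1 - (ℓ - 1) = 2 by ring]
  have hgv : Int.gcd (u * v : ℤ) (ℓ - 1) = v := by
    refine Int.gcd_mul_natCast_eq hℓv (Int.isCoprime_of_dvd_of_sub_dvd_two hu.natCast hℓu ?_)
    rw [show ℓ - 1 - (ℓ + 1) = -2 by ring, neg_dvd]
  refine ⟨(c * (u * v), ℓ), ⟨⟨c, by ring⟩, ⟨u * v, by ring⟩, h0, ?_, ?_⟩, ?_⟩ <;>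
    dsimp only [toSqCoprimeFactorization] <;> rw [hm] <;> push_cast
  · exact hlt
  · exact (Int.modEq_iff_dvd.mpr (by
      rw [show ℓ ^ 2 - 1 = (ℓ + 1) * (ℓ - 1) by ring]; exact mul_dvd_mul hℓu hℓv)).symm
  · rw [hc, hgu, hgv]

theorem bijOn_toSqCoprimeFactorization {n : ℕ} (hn : Odd n) :
    Set.BijOn (toSqCoprimeFactorization n) (sqrtOnePairs n) (sqCoprimeFactorizations n) :=
  ⟨mapsTo_toSqCoprimeFactorization hn, injOn_toSqCoprimeFactorization hn,
    surjOn_toSqCoprimeFactorization hn⟩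

theorem Btilde_count_general (n : ℕ) (hodd : Odd n) :
    Nat.card {p : ℕ × ℤ // p.1 ∣ n ∧ n ∣ p.1 ^ 2 ∧ 0 ≤ p.2 ∧
      p.2 < ((p.1 ^ 2 / n : ℕ) : ℤ) ∧ p.2 ^ 2 ≡ 1 [ZMOD ((p.1 ^ 2 / n : ℕ) : ℤ)]} =
    n.divisors.card := calc
  _ = Nat.card (sqCoprimeFactorizations n) :=
    Nat.card_congr (bijOn_toSqCoprimeFactorization hodd).equiv
  _ = Nat.card (n.divisors : Set ℕ) :=
    Nat.card_congr (bijOn_sqCoprimeFactorizations_divisors hodd.pos.ne').equiv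
  _ = n.divisors.card := Nat.card_eq_finsetCard _

/-- The number of pairs `(d,ℓ)` with `d ∣ n`, `n ∣ d²`, and `ℓ` a residue class
mod `d²/n` satisfying `ℓ² ≡ 1 (mod d²/n)`, equals the number of divisors of `n`. -/
theorem Btilde_count (n : ℕ) (hodd : Odd n) (hpos : 0 < n) :
    Nat.card {p : ℕ × ℤ // p.1 ∣ n ∧ n ∣ p.1 ^ 2 ∧ 0 ≤ p.2 ∧
      p.2 < ((p.1 ^ 2 / n : ℕ) : ℤ) ∧ p.2 ^ 2 ≡ 1 [ZMOD ((p.1 ^ 2 / n : ℕ) : ℤ)]} =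
    n.divisors.card :=
  Btilde_count_general n hodd
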